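/- Let λ₁, λ₂ > 0, let t ≥ 0, let η₁, η₂ ∈ ℝ satisfy η₁ t < λ₁ and η₂ t < λ₂, and let a ∈ ℝ. Then ∫₀^∞ ∫₀^∞ (1 − η₁ t/λ₁)(1 − η₂ t/λ₂) · exp( (η₁ x₁ + η₂ x₂ − a) t ) · λ₁ e^{−λ₁ x₁} · λ₂ e^{−λ₂ x₂} dx₁ dx₂ = exp(−a t). -/

import Mathlib

open MeasureTheory

lemma exp_int_aux (b : ℝ) (hb : 0 < b) :
    ∫ x in Set.Ioi (0 : ℝ), Real.exp (-b * x) = 1 / b := by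
  have hd : ∀ x : ℝ,
      HasDerivAt (fun y => -Real.exp (-b * y) / b) (Real.exp (-b * x)) x := by
    intro x
    have h1 : HasDerivAt (fun y : ℝ => -b * y) (-b) x := by
      simpa using (hasDerivAt_id x).const_mul (-b)
    have h2 : HasDerivAt (fun y => Real.exp (-b * y)) (Real.exp (-b * x) * (-b)) x :=
      (Real.hasDerivAt_exp _).comp x h1
    have h3 := (h2.neg).div_const b
    exact h3.congr_deriv (by field_simp)
  have hi : IntegrableOn (fun x => Real.exp (-b * x)) (Set.Ioi (0 : ℝ)) :=
    exp_neg_integrableOn_Ioi 0 hb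
  have hlin : Filter.Tendsto (fun y : ℝ => -b * y) Filter.atTop Filter.atBot :=
    Filter.Tendsto.const_mul_atTop_of_neg (by linarith) Filter.tendsto_id
  have htend : Filter.Tendsto (fun y => -Real.exp (-b * y) / b) Filter.atTop (nhds 0) := by
    have h0 : Filter.Tendsto (fun y => Real.exp (-b * y)) Filter.atTop (nhds 0) :=
      Real.tendsto_exp_atBot.comp hlin
    simpa using (h0.neg).div_const b
  have := MeasureTheory.integral_Ioi_of_hasDerivAt_of_tendsto'
    (f := fun y => -Real.exp (-b * y) / b) (fun x _ => hd x) hi htend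
  rw [this]
  simp [div_eq_iff hb.ne']
  ring

/-- Integrating the conditional survival function of `T⁽¹⁾` against the
distribution of the independent Exponential(λ₁), Exponential(λ₂) covariates
gives the marginal survival function `exp(−a t)`. -/
theorem stmt_3 (l₁ l₂ : ℝ) (hl₁ : 0 < l₁) (hl₂ : 0 < l₂) (t : ℝ) (ht : 0 ≤ t)
    (η₁ η₂ a : ℝ) (h₁ : η₁ * t < l₁) (h₂ : η₂ * t < l₂) :
    (∫ x₁ in Set.Ioi (0 : ℝ), ∫ x₂ in Set.Ioi (0 : ℝ),
        (1 - η₁ * t / l₁) * (1 - η₂ * t / l₂) *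
          Real.exp ((η₁ * x₁ + η₂ * x₂ - a) * t) *
          (l₁ * Real.exp (-l₁ * x₁)) * (l₂ * Real.exp (-l₂ * x₂))) =
      Real.exp (-a * t) := by
  have hb₁ : 0 < l₁ - η₁ * t := by linarith
  have hb₂ : 0 < l₂ - η₂ * t := by linarith
  set A : ℝ := (1 - η₁ * t / l₁) * (1 - η₂ * t / l₂) * l₁ * l₂ * Real.exp (-a * t) with hA
  have key : ∀ x₁ x₂ : ℝ,
      (1 - η₁ * t / l₁) * (1 - η₂ * t / l₂) *
          Real.exp ((η₁ * x₁ + η₂ * x₂ - a) * t) *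
          (l₁ * Real.exp (-l₁ * x₁)) * (l₂ * Real.exp (-l₂ * x₂)) =
      A * Real.exp (-(l₁ - η₁ * t) * x₁) * Real.exp (-(l₂ - η₂ * t) * x₂) := by
    intro x₁ x₂
    rw [hA]
    rw [show (η₁ * x₁ + η₂ * x₂ - a) * t
        = -a * t + (η₁ * t * x₁) + (η₂ * t * x₂) by ring,
      show -(l₁ - η₁ * t) * x₁ = -l₁ * x₁ + η₁ * t * x₁ by ring,
      show -(l₂ - η₂ * t) * x₂ = -l₂ * x₂ + η₂ * t * x₂ by ring,
      Real.exp_add, Real.exp_add, Real.exp_add, Real.exp_add]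
    ring
  have inner : ∀ x₁ : ℝ, (∫ x₂ in Set.Ioi (0 : ℝ),
      A * Real.exp (-(l₁ - η₁ * t) * x₁) * Real.exp (-(l₂ - η₂ * t) * x₂)) =
      (A * (1 / (l₂ - η₂ * t))) * Real.exp (-(l₁ - η₁ * t) * x₁) := by
    intro x₁
    rw [MeasureTheory.integral_const_mul, exp_int_aux _ hb₂]
    ring
  simp_rw [key, inner, MeasureTheory.integral_const_mul, exp_int_aux _ hb₁]
  rw [hA]
  field_simp
  exact div_self (by linarith)
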